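/- arXiv:2007.10266 — 2 statements merged into one kernel-verified Lean document; each statement's English description precedes it below -/
import Mathlib

section
/- Let υ ∈ C_c^∞(ℝ) satisfy 0 ≤ υ(x) ≤ 1 for all x ∈ ℝ and υ(x) = 1 for |x| ≤ 1, and for n ∈ ℕ set υ_n(x) := υ(x/n). If a ∈ C_0(ℝ) has bounded variation V(a) < ∞, then ‖a − υ_n a‖_{L^∞(ℝ)} + V(a − υ_n a) → 0 as n → ∞. -/
open Filter Topology Set
open scoped ENNReal NNReal

/-!
Write `a - υ_n a = (1 - υ(·/n)) • a`. The cutoff `1 - υ(·/n)` vanishes on `[-n, n]`, has modulus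
at most `1`, and its variation is at most `V(υ) < ∞`, since `υ` is Lipschitz with compact support.
So with `δ_n := sup_{|x| ≥ n} ‖a x‖` the sup norm is at most `δ_n`, and the product rule for
variations on the two tails gives `V(a - υ_n a) ≤ V(a; (-∞, -n]) + V(a; [n, ∞)) + 2 δ_n V(υ)`.
Both `δ_n` and the tail variations of a function of bounded variation tend to `0`.
-/

theorem eVariationOn_univ_eq_Iic_add_Icc_add_Ici {α E : Type*} [LinearOrder α]
    [PseudoEMetricSpace E] (f : α → E) {c d : α} (hcd : c ≤ d) :
    eVariationOn f univ =
      eVariationOn f (Iic c) + eVariationOn f (Icc c d) + eVariationOn f (Ici d) := by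
  rw [← eVariationOn.union f isGreatest_Iic (isLeast_Icc hcd), Iic_union_Icc_eq_Iic hcd,
    ← eVariationOn.union f isGreatest_Iic isLeast_Ici, Iic_union_Ici]

theorem eVariationOn_const_sub {α E : Type*} [LinearOrder α] [SeminormedAddCommGroup E] (c : E)
    (f : α → E) (s : Set α) :
    eVariationOn (fun x => c - f x) s = eVariationOn f s := by
  simp only [eVariationOn, edist_sub_left]

theorem LipschitzWith.boundedVariationOn_univ_of_hasCompactSupport {E : Type*}
    [NormedAddCommGroup E] {f : ℝ → E} {C : ℝ≥0} (hf : LipschitzWith C f)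
    (hc : HasCompactSupport f) : BoundedVariationOn f univ := by
  obtain ⟨R, hR, hfR⟩ := hc.exists_pos_le_norm
  have hzero : ∀ s : Set ℝ, (∀ x ∈ s, R ≤ |x|) → eVariationOn f s = 0 := fun s hs =>
    eVariationOn.constant_on <| (subsingleton_singleton (a := 0)).anti <| by
      rintro - ⟨x, hx, rfl⟩; exact hfR x (hs x hx)
  have hIic : eVariationOn f (Iic (-R)) = 0 :=
    hzero _ fun x hx => le_abs.2 (Or.inr (by simp only [mem_Iic] at hx; linarith))
  have hIci : eVariationOn f (Ici R) = 0 := hzero _ fun x hx => le_abs.2 (Or.inl hx)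
  have hIcc := hf.locallyBoundedVariationOn univ (-R) R trivial trivial
  rw [univ_inter] at hIcc
  rwa [BoundedVariationOn, eVariationOn_univ_eq_Iic_add_Icc_add_Ici f (by linarith : -R ≤ R),
    hIic, hIci, zero_add, add_zero]

theorem tendsto_iSup_enorm_of_tendsto_cocompact {E F : Type*} [NormedAddCommGroup E]
    [ProperSpace E] [NormedAddCommGroup F] {f : E → F} (hf : Tendsto f (cocompact E) (𝓝 0)) :
    Tendsto (fun r : ℝ => ⨆ (x : E) (_ : r ≤ ‖x‖), ‖f x‖ₑ) atTop (𝓝 0) := by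
  rw [ENNReal.tendsto_nhds_zero]
  intro ε hε
  have hfε : ∀ᶠ x in cocompact E, ‖f x‖ₑ ≤ ε :=
    ENNReal.tendsto_nhds_zero.1 (by simpa using hf.enorm) ε hε
  rw [← Metric.cobounded_eq_cocompact, ← comap_norm_atTop, eventually_comap,
    eventually_atTop] at hfε
  obtain ⟨R, hR⟩ := hfε
  filter_upwards [eventually_ge_atTop R] with r hr
  exact iSup₂_le fun x hx => hR _ (hr.trans hx) x rfl

theorem ENNReal.ofReal_iSup_norm_le {ι E : Type*} [SeminormedAddCommGroup E] {g : ι → E}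
    {C : ℝ≥0∞} (hg : ∀ i, ‖g i‖ₑ ≤ C) : ENNReal.ofReal (⨆ i, ‖g i‖) ≤ C := by
  rcases eq_or_ne C ⊤ with rfl | hC
  · exact le_top
  refine ENNReal.ofReal_le_of_le_toReal (Real.iSup_le (fun i => ?_) ENNReal.toReal_nonneg)
  rw [← toReal_enorm]
  exact ENNReal.toReal_mono hC (hg i)

theorem enorm_one_sub_le_one {t : ℝ} (h0 : 0 ≤ t) (h1 : t ≤ 1) : ‖1 - t‖ₑ ≤ 1 := by
  rw [← ofReal_norm, Real.norm_eq_abs, ENNReal.ofReal_le_one, abs_le]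
  constructor <;> linarith

section Cutoff

variable {E : Type*} [NormedAddCommGroup E] [NormedSpace ℝ E] {υ : ℝ → ℝ} {n : ℝ}

theorem one_sub_comp_div_eq_zero (hυ1 : ∀ x : ℝ, |x| ≤ 1 → υ x = 1) (hn : 0 < n) {x : ℝ}
    (hx : ‖x‖ ≤ n) : 1 - υ (x / n) = 0 := by
  have hxn : |x / n| ≤ 1 := by
    rw [abs_div, abs_of_pos hn]
    exact div_le_one_of_le₀ hx hn.le
  rw [hυ1 _ hxn, sub_self]

theorem eVariationOn_one_sub_comp_div_le (υ : ℝ → ℝ) (hn : 0 ≤ n) (s : Set ℝ) :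
    eVariationOn (fun x => 1 - υ (x / n)) s ≤ eVariationOn υ univ := by
  rw [eVariationOn_const_sub]
  exact eVariationOn.comp_le_of_monotoneOn υ (· / n)
    (fun _ _ _ _ hxy => div_le_div_of_nonneg_right hxy hn) (mapsTo_univ _ _)

theorem enorm_one_sub_comp_div_smul_le (hυ01 : ∀ x : ℝ, 0 ≤ υ x ∧ υ x ≤ 1)
    (hυ1 : ∀ x : ℝ, |x| ≤ 1 → υ x = 1) (hn : 0 < n) {a : ℝ → E} {D : ℝ≥0∞}
    (hD : ∀ x, n ≤ ‖x‖ → ‖a x‖ₑ ≤ D) (x : ℝ) : ‖(1 - υ (x / n)) • a x‖ₑ ≤ D := by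
  rcases le_total ‖x‖ n with hx | hx
  · simp [one_sub_comp_div_eq_zero hυ1 hn hx]
  · calc ‖(1 - υ (x / n)) • a x‖ₑ = ‖1 - υ (x / n)‖ₑ * ‖a x‖ₑ := enorm_smul _ _
      _ ≤ 1 * D := by gcongr; exacts [enorm_one_sub_le_one (hυ01 _).1 (hυ01 _).2, hD x hx]
      _ = D := one_mul D

theorem eVariationOn_one_sub_comp_div_smul_le (hυ01 : ∀ x : ℝ, 0 ≤ υ x ∧ υ x ≤ 1)
    (hυ1 : ∀ x : ℝ, |x| ≤ 1 → υ x = 1) (hn : 0 < n) (a : ℝ → E) {D : ℝ≥0∞}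
    (hD : ∀ x, n ≤ ‖x‖ → ‖a x‖ₑ ≤ D) :
    eVariationOn (fun x => (1 - υ (x / n)) • a x) univ ≤
      (eVariationOn a (Iic (-n)) + D * eVariationOn υ univ) +
        (eVariationOn a (Ici n) + D * eVariationOn υ univ) := by
  have htail : ∀ s : Set ℝ, (∀ x ∈ s, n ≤ ‖x‖) →
      eVariationOn (fun x => (1 - υ (x / n)) • a x) s ≤
        eVariationOn a s + D * eVariationOn υ univ :=
    fun s hs => calc
      _ ≤ 1 * eVariationOn a s + D * eVariationOn (fun x => 1 - υ (x / n)) s :=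
        eVariationOn_fun_smul_le (fun x _ => enorm_one_sub_le_one (hυ01 _).1 (hυ01 _).2)
          (fun x hx => hD x (hs x hx))
      _ ≤ _ := by
        rw [one_mul]; gcongr; exact eVariationOn_one_sub_comp_div_le υ hn.le s
  have hmid : eVariationOn (fun x => (1 - υ (x / n)) • a x) (Icc (-n) n) = 0 := by
    refine eVariationOn.constant_on <| (subsingleton_singleton (a := 0)).anti ?_
    rintro - ⟨x, hx, rfl⟩
    simp [one_sub_comp_div_eq_zero hυ1 hn (abs_le.2 hx)]
  rw [eVariationOn_univ_eq_Iic_add_Icc_add_Ici _ (by linarith : -n ≤ n), hmid, add_zero]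
  gcongr <;> refine htail _ fun x hx => ?_
  · simp only [mem_Iic] at hx; rw [Real.norm_eq_abs]; exact le_abs.2 (Or.inr (by linarith))
  · exact hx.trans (le_abs_self x)

end Cutoff

theorem stmt1_general (υ : ℝ → ℝ) (hυ_smooth : ContDiff ℝ (⊤ : ℕ∞) υ)
    (hυ_supp : HasCompactSupport υ)
    (hυ01 : ∀ x : ℝ, 0 ≤ υ x ∧ υ x ≤ 1) (hυ1 : ∀ x : ℝ, |x| ≤ 1 → υ x = 1)
    (a : ℝ → ℂ) (ha0 : Tendsto a (cocompact ℝ) (nhds 0))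
    (haV : eVariationOn a Set.univ ≠ ⊤) :
    Tendsto
      (fun n : ℕ =>
        ENNReal.ofReal (⨆ x : ℝ, ‖a x - (υ (x / n) : ℂ) * a x‖) +
          eVariationOn (fun x : ℝ => a x - (υ (x / n) : ℂ) * a x) Set.univ)
      atTop (nhds 0) := by
  obtain ⟨C, hυ_lip⟩ := ContDiff.lipschitzWith_of_hasCompactSupport hυ_supp hυ_smooth (by simp)
  have hυV : eVariationOn υ univ ≠ ⊤ :=
    hυ_lip.boundedVariationOn_univ_of_hasCompactSupport hυ_supp
  set δ : ℝ → ℝ≥0∞ := fun r => ⨆ (x : ℝ) (_ : r ≤ ‖x‖), ‖a x‖ₑ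
  have hδ : Tendsto (fun n : ℕ => δ n) atTop (𝓝 0) :=
    (tendsto_iSup_enorm_of_tendsto_cocompact ha0).comp tendsto_natCast_atTop_atTop
  have hIic : Tendsto (fun n : ℕ => eVariationOn a (Iic (-n))) atTop (𝓝 0) := by
    have h := BoundedVariationOn.tendsto_eVariationOn_Iic_zero haV
    simp only [principal_univ, top_inf_eq, univ_inter] at h
    exact h.comp (tendsto_neg_atTop_atBot.comp tendsto_natCast_atTop_atTop)
  have hIci : Tendsto (fun n : ℕ => eVariationOn a (Ici n)) atTop (𝓝 0) := by
    have h := BoundedVariationOn.tendsto_eVariationOn_Ici_zero haV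
    simp only [principal_univ, top_inf_eq, univ_inter] at h
    exact h.comp tendsto_natCast_atTop_atTop
  have hbound : Tendsto (fun n : ℕ => δ n +
      ((eVariationOn a (Iic (-n)) + δ n * eVariationOn υ univ) +
        (eVariationOn a (Ici n) + δ n * eVariationOn υ univ))) atTop (𝓝 0) := by
    simpa using hδ.add ((hIic.add (ENNReal.Tendsto.mul_const hδ (.inr hυV))).add
      (hIci.add (ENNReal.Tendsto.mul_const hδ (.inr hυV))))
  refine tendsto_of_tendsto_of_tendsto_of_le_of_le' tendsto_const_nhds hbound
    (.of_forall fun _ => zero_le) ?_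
  filter_upwards [eventually_gt_atTop 0] with n hn
  have hn_pos : (0 : ℝ) < n := Nat.cast_pos.2 hn
  have hcutoff : ∀ x : ℝ, a x - (υ (x / n) : ℂ) * a x = (1 - υ (x / n)) • a x := fun x => by
    rw [sub_smul, one_smul, Complex.real_smul]
  have hδn : ∀ x, (n : ℝ) ≤ ‖x‖ → ‖a x‖ₑ ≤ δ n := fun x hx =>
    le_iSup₂ (f := fun x _ => ‖a x‖ₑ) x hx
  simp only [hcutoff]
  exact add_le_add
    (ENNReal.ofReal_iSup_norm_le (enorm_one_sub_comp_div_smul_le hυ01 hυ1 hn_pos hδn))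
    (eVariationOn_one_sub_comp_div_smul_le hυ01 hυ1 hn_pos a hδn)

/-- If `υ` is a smooth compactly supported function with `0 ≤ υ ≤ 1` and `υ = 1` on
`[-1, 1]`, `υ_n(x) := υ(x/n)`, and `a ∈ C₀(ℝ)` has bounded variation, then
`‖a - υ_n a‖_∞ + V(a - υ_n a) → 0` as `n → ∞`. -/
theorem stmt1 (υ : ℝ → ℝ) (hυ_smooth : ContDiff ℝ (⊤ : ℕ∞) υ)
    (hυ_supp : HasCompactSupport υ)
    (hυ01 : ∀ x : ℝ, 0 ≤ υ x ∧ υ x ≤ 1) (hυ1 : ∀ x : ℝ, |x| ≤ 1 → υ x = 1)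
    (a : ℝ → ℂ) (ha : Continuous a) (ha0 : Tendsto a (cocompact ℝ) (nhds 0))
    (haV : eVariationOn a Set.univ ≠ ⊤) :
    Tendsto
      (fun n : ℕ =>
        ENNReal.ofReal (⨆ x : ℝ, ‖a x - (υ (x / n) : ℂ) * a x‖) +
          eVariationOn (fun x : ℝ => a x - (υ (x / n) : ℂ) * a x) Set.univ)
      atTop (nhds 0) :=
  stmt1_general υ hυ_smooth hυ_supp hυ01 hυ1 a ha0 haV
end

section
/- Let R₁, R₂ > 0 and let k : ℝ → ℂ be continuously differentiable with bounded derivative and with support contained in [−R₁, R₁]. Then the convolution operator K defined by (Kf)(x) := ∫_ℝ k(x−y) f(y) dy is a compact linear operator from the space of L¹ functions on ℝ supported in [−R₂, R₂] (equivalently, L¹ of the interval [−R₂, R₂]) to the Banach space C([−(R₁+R₂), R₁+R₂], ℂ) of continuous functions on [−(R₁+R₂), R₁+R₂] with the supremum norm. -/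
/-!
A kernel bounded by `M` and `L`-Lipschitz in its first variable sends the unit ball of `L¹` to
functions bounded by `M` and `L`-Lipschitz, a compact set of continuous functions on a compact
space by Arzelà–Ascoli. The convolution kernel `(x, y) ↦ k (x - y)` is of this kind: `k` is
bounded because it is continuous with compact support, and Lipschitz by the mean value theorem.
-/

open MeasureTheory

open scoped NNReal

lemma isCompact_setOf_lipschitzWith_norm_le {X E : Type*} [PseudoMetricSpace X] [CompactSpace X]
    [NormedAddCommGroup E] [ProperSpace E] (L : ℝ≥0) (M : ℝ) :
    IsCompact {g : C(X, E) | LipschitzWith L g ∧ ∀ x, ‖g x‖ ≤ M} := by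
  set S₀ : Set (X → E) := {g | LipschitzWith L g ∧ ∀ x, ‖g x‖ ≤ M}
  have hS₀ : IsCompact S₀ := by
    have hclosed : IsClosed S₀ := by
      simp only [S₀, lipschitzWith_iff_dist_le_mul, Set.ofPred_and, Set.ofPred_forall]
      exact .inter (isClosed_iInter fun x => isClosed_iInter fun y =>
          isClosed_le ((continuous_apply x).dist (continuous_apply y)) continuous_const)
        (isClosed_iInter fun x => isClosed_le (continuous_apply x).norm continuous_const)
    refine (isCompact_univ_pi fun _ => isCompact_closedBall (0 : E) M).of_isClosed_subset
      hclosed fun g hg x _ => ?_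
    simpa using hg.2 x
  apply ArzelaAscoli.isCompact_of_equicontinuous
  · convert hS₀
    ext g
    exact ⟨fun ⟨g', hg', h⟩ => h ▸ hg', fun hg => ⟨⟨g, hg.1.continuous⟩, hg, rfl⟩⟩
  · exact Metric.equicontinuous_of_continuity_modulus (fun t => L * t)
      ((continuous_const_mul (L : ℝ)).tendsto' 0 0 (mul_zero _)) _
      fun x y g => g.2.1.dist_le_mul x y

section IntegralKernel

variable {α 𝕜 : Type*} [MeasurableSpace α] {μ : Measure α} [RCLike 𝕜]

lemma norm_integral_mul_le_of_norm_le {g : α → 𝕜} {C : ℝ} (hg : ∀ y, ‖g y‖ ≤ C)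
    (f : Lp 𝕜 1 μ) : ‖∫ y, g y * f y ∂μ‖ ≤ C * ‖f‖ := by
  rw [L1.norm_eq_integral_norm, ← integral_const_mul]
  refine norm_integral_le_of_norm_le ((L1.integrable_coeFn f).norm.const_mul C) (ae_of_all _ ?_)
  intro y
  rw [norm_mul]
  exact mul_le_mul_of_nonneg_right (hg y) (norm_nonneg _)

lemma integrable_mul_of_norm_le {g : α → 𝕜} {C : ℝ} (hg : AEStronglyMeasurable g μ)
    (hgC : ∀ y, ‖g y‖ ≤ C) (f : Lp 𝕜 1 μ) : Integrable (fun y => g y * f y) μ :=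
  (L1.integrable_coeFn f).bdd_mul hg (ae_of_all _ hgC)

variable {X : Type*} [PseudoMetricSpace X] {κ : X → α → 𝕜} {M L : ℝ≥0}

lemma lipschitzWith_integral_kernel_mul (hmeas : ∀ x, AEStronglyMeasurable (κ x) μ)
    (hbdd : ∀ x y, ‖κ x y‖ ≤ M) (hlip : ∀ y, LipschitzWith L (κ · y)) (f : Lp 𝕜 1 μ) :
    LipschitzWith (L * ‖f‖₊) (fun x => ∫ y, κ x y * f y ∂μ) := by
  refine .of_dist_le_mul fun x x' => ?_
  rw [dist_eq_norm, ← integral_sub (integrable_mul_of_norm_le (hmeas x) (hbdd x) f)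
    (integrable_mul_of_norm_le (hmeas x') (hbdd x') f)]
  simp_rw [← sub_mul]
  calc _ ≤ L * dist x x' * ‖f‖ := norm_integral_mul_le_of_norm_le
        (fun y => dist_eq_norm (κ x y) _ ▸ (hlip y).dist_le_mul x x') f
    _ = _ := by push_cast; ring

variable [CompactSpace X]

variable (μ) in
noncomputable def kernelOperator (κ : X → α → 𝕜) (hmeas : ∀ x, AEStronglyMeasurable (κ x) μ)
    (hbdd : ∀ x y, ‖κ x y‖ ≤ M) (hlip : ∀ y, LipschitzWith L (κ · y)) :
    Lp 𝕜 1 μ →L[𝕜] C(X, 𝕜) :=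
  LinearMap.mkContinuous
    { toFun f := ⟨fun x => ∫ y, κ x y * f y ∂μ,
        (lipschitzWith_integral_kernel_mul hmeas hbdd hlip f).continuous⟩
      map_add' f g := by
        ext x
        simp only [ContinuousMap.coe_mk, ContinuousMap.add_apply]
        rw [← integral_add (integrable_mul_of_norm_le (hmeas x) (hbdd x) f)
          (integrable_mul_of_norm_le (hmeas x) (hbdd x) g)]
        refine integral_congr_ae ?_
        filter_upwards [Lp.coeFn_add f g] with y hy
        rw [hy, Pi.add_apply, mul_add]
      map_smul' c f := by
        ext x
        simp only [ContinuousMap.coe_mk, ContinuousMap.smul_apply, RingHom.id_apply]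
        rw [← integral_smul]
        refine integral_congr_ae ?_
        filter_upwards [Lp.coeFn_smul c f] with y hy
        rw [hy, Pi.smul_apply, smul_eq_mul, smul_eq_mul, mul_left_comm] }
    M fun f => (ContinuousMap.norm_le _ (by positivity)).2 fun x =>
      norm_integral_mul_le_of_norm_le (hbdd x) f

lemma kernelOperator_apply (hmeas : ∀ x, AEStronglyMeasurable (κ x) μ)
    (hbdd : ∀ x y, ‖κ x y‖ ≤ M) (hlip : ∀ y, LipschitzWith L (κ · y)) (f : Lp 𝕜 1 μ) (x : X) :
    kernelOperator μ κ hmeas hbdd hlip f x = ∫ y, κ x y * f y ∂μ :=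
  rfl

lemma isCompactOperator_kernelOperator
    (hmeas : ∀ x, AEStronglyMeasurable (κ x) μ) (hbdd : ∀ x y, ‖κ x y‖ ≤ M)
    (hlip : ∀ y, LipschitzWith L (κ · y)) :
    IsCompactOperator (kernelOperator μ κ hmeas hbdd hlip) := by
  refine ⟨_, isCompact_setOf_lipschitzWith_norm_le L M,
    Filter.mem_of_superset (Metric.ball_mem_nhds 0 one_pos) fun f hf => ?_⟩
  have hf : ‖f‖ ≤ 1 := (mem_ball_zero_iff.1 hf).le
  refine ⟨?_, fun x => ?_⟩
  · exact (lipschitzWith_integral_kernel_mul hmeas hbdd hlip f).weaken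
      (mul_le_of_le_one_right' (by exact_mod_cast hf))
  · calc ‖kernelOperator μ κ hmeas hbdd hlip f x‖ ≤ M * ‖f‖ :=
          norm_integral_mul_le_of_norm_le (hbdd x) f
      _ ≤ M := mul_le_of_le_one_right (by positivity) hf

end IntegralKernel

theorem stmt6_general (R₁ R₂ : ℝ) (k : ℝ → ℂ)
    (hk : ContDiff ℝ 1 k) (hk_bdd : ∃ C : ℝ, ∀ x : ℝ, ‖deriv k x‖ ≤ C)
    (hk_supp : Function.support k ⊆ Set.Icc (-R₁) R₁) :
    ∃ T : Lp ℂ 1 (volume.restrict (Set.Icc (-R₂) R₂)) →L[ℂ]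
        C(Set.Icc (-(R₁ + R₂)) (R₁ + R₂), ℂ),
      (∀ f : Lp ℂ 1 (volume.restrict (Set.Icc (-R₂) R₂)),
        ∀ x : Set.Icc (-(R₁ + R₂)) (R₁ + R₂),
          T f x = ∫ y : ℝ, k ((x : ℝ) - y) * f y ∂(volume.restrict (Set.Icc (-R₂) R₂))) ∧
      IsCompactOperator T := by
  obtain ⟨M, hM⟩ := (HasCompactSupport.of_support_subset_isCompact isCompact_Icc hk_supp)
    |>.exists_bound_of_continuous hk.continuous
  obtain ⟨C, hC⟩ := hk_bdd
  have hlip : LipschitzWith C.toNNReal k :=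
    lipschitzWith_of_nnnorm_deriv_le (hk.differentiable one_ne_zero) fun x =>
      NNReal.coe_le_coe.1 ((hC x).trans (Real.le_coe_toNNReal C))
  let κ (x : Set.Icc (-(R₁ + R₂)) (R₁ + R₂)) (y : ℝ) : ℂ := k (x - y)
  have hmeas (x) : AEStronglyMeasurable (κ x) (volume.restrict (Set.Icc (-R₂) R₂)) :=
    (hk.continuous.comp (continuous_const.sub continuous_id)).aestronglyMeasurable
  have hbdd (x y) : ‖κ x y‖ ≤ M.toNNReal := (hM _).trans (Real.le_coe_toNNReal M)
  have hκlip (y) : LipschitzWith C.toNNReal (κ · y) :=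
    (hlip.comp ((IsometryEquiv.subRight y).isometry.lipschitz.comp
      (LipschitzWith.subtype_val _))).weaken (by simp)
  exact ⟨kernelOperator _ κ hmeas hbdd hκlip, kernelOperator_apply hmeas hbdd hκlip,
    isCompactOperator_kernelOperator hmeas hbdd hκlip⟩

/-- If `k` is continuously differentiable with bounded derivative and supported in
`[-R₁, R₁]`, then the convolution operator `f ↦ k ∗ f` is a compact operator from
`L¹([-R₂, R₂])` to `C([-(R₁+R₂), R₁+R₂])`. -/
theorem stmt6 (R₁ R₂ : ℝ) (hR₁ : 0 < R₁) (hR₂ : 0 < R₂) (k : ℝ → ℂ)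
    (hk : ContDiff ℝ 1 k) (hk_bdd : ∃ C : ℝ, ∀ x : ℝ, ‖deriv k x‖ ≤ C)
    (hk_supp : Function.support k ⊆ Set.Icc (-R₁) R₁) :
    ∃ T : Lp ℂ 1 (volume.restrict (Set.Icc (-R₂) R₂)) →L[ℂ]
        C(Set.Icc (-(R₁ + R₂)) (R₁ + R₂), ℂ),
      (∀ f : Lp ℂ 1 (volume.restrict (Set.Icc (-R₂) R₂)),
        ∀ x : Set.Icc (-(R₁ + R₂)) (R₁ + R₂),
          T f x = ∫ y : ℝ, k ((x : ℝ) - y) * f y ∂(volume.restrict (Set.Icc (-R₂) R₂))) ∧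
      IsCompactOperator T :=
  stmt6_general R₁ R₂ k hk hk_bdd hk_supp
end
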